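/- arXiv:2206.10518 — 8 statements merged into one kernel-verified Lean document; each statement's English description precedes it below -/
import Mathlib

section
/- Global asymptotic stability of the constant off-time peak current control loop (Theorem 1): Let m₁ > 0 and Λ ≥ 0 satisfy Λ < m₁/2. For each n ∈ ℕ let ψₙ : ℝ → ℝ be Lipschitz with constant Λ and satisfy ψₙ(0) = 0. Suppose real sequences (xₙ)ₙ≥0 and (tₙ)ₙ≥1 satisfy, for all n ≥ 1, xₙ = xₙ₋₁ + m₁ tₙ and 0 = xₙ + ψₙ(tₙ). Then for every initial condition x₀ ∈ ℝ one has |xₙ| ≤ (Λ/(m₁ − Λ))ⁿ |x₀| for all n ≥ 0; in particular xₙ → 0 and tₙ → 0 as n → ∞. -/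
/-- Global asymptotic stability of the constant off-time peak current control loop
(Theorem 1). -/
theorem constant_off_time_global_asymptotic_stability
    (m₁ Λ : ℝ) (hm₁ : 0 < m₁) (hΛ : 0 ≤ Λ) (hΛm : Λ < m₁ / 2)
    (ψ : ℕ → ℝ → ℝ)
    (hlip : ∀ n a b, |ψ n a - ψ n b| ≤ Λ * |a - b|)
    (hψ0 : ∀ n, ψ n 0 = 0)
    (x t : ℕ → ℝ)
    (hrec : ∀ n : ℕ, 1 ≤ n → x n = x (n - 1) + m₁ * t n)
    (htrig : ∀ n : ℕ, 1 ≤ n → 0 = x n + ψ n (t n)) :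
    (∀ n : ℕ, |x n| ≤ (Λ / (m₁ - Λ)) ^ n * |x 0|) ∧
      Filter.Tendsto x Filter.atTop (nhds 0) ∧
      Filter.Tendsto t Filter.atTop (nhds 0) := by
  have hmΛ : 0 < m₁ - Λ := by linarith
  set r : ℝ := Λ / (m₁ - Λ) with hr
  have hr0 : 0 ≤ r := div_nonneg hΛ hmΛ.le
  have hr1 : r < 1 := (div_lt_one hmΛ).2 (by linarith)
  -- |x n| ≤ Λ * |t n| for n ≥ 1
  have hxbound : ∀ n : ℕ, 1 ≤ n → |x n| ≤ Λ * |t n| := by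
    intro n hn
    have h := htrig n hn
    have hx : x n = -(ψ n (t n)) := by linarith
    have := hlip n (t n) 0
    rw [hψ0 n, sub_zero, sub_zero] at this
    rw [hx, abs_neg]
    exact this
  -- (m₁ - Λ) * |t n| ≤ |x (n-1)|
  have htbound : ∀ n : ℕ, 1 ≤ n → (m₁ - Λ) * |t n| ≤ |x (n - 1)| := by
    intro n hn
    have h1 := hrec n hn
    have h2 := hxbound n hn
    have : m₁ * t n = x n - x (n - 1) := by linarith
    have h3 : m₁ * |t n| = |x n - x (n - 1)| := by
      rw [← this, abs_mul, abs_of_pos hm₁]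
    have h4 : |x n - x (n - 1)| ≤ |x n| + |x (n - 1)| := abs_sub _ _
    nlinarith [abs_nonneg (t n)]
  -- |x n| ≤ r * |x (n-1)|
  have hstep : ∀ n : ℕ, 1 ≤ n → |x n| ≤ r * |x (n - 1)| := by
    intro n hn
    have h1 := hxbound n hn
    have h2 := htbound n hn
    rw [hr, div_mul_eq_mul_div, le_div_iff₀ hmΛ]
    nlinarith
  have hmain : ∀ n : ℕ, |x n| ≤ r ^ n * |x 0| := by
    intro n
    induction n with
    | zero => simp
    | succ k ih =>
        have h1 := hstep (k + 1) (Nat.le_add_left 1 k)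
        simp only [Nat.add_sub_cancel] at h1
        calc |x (k + 1)| ≤ r * |x k| := h1
          _ ≤ r * (r ^ k * |x 0|) := by
              exact mul_le_mul_of_nonneg_left ih hr0
          _ = r ^ (k + 1) * |x 0| := by ring
  refine ⟨hmain, ?_, ?_⟩
  · have hg : Filter.Tendsto (fun n : ℕ => r ^ n * |x 0|) Filter.atTop (nhds 0) := by
      have := (tendsto_pow_atTop_nhds_zero_of_lt_one hr0 hr1).mul_const (|x 0|)
      simpa using this
    exact squeeze_zero_norm (fun n => by simpa using hmain n) hg
  · have hg : Filter.Tendsto (fun n : ℕ => (1 / (m₁ - Λ)) * (r ^ (n - 1) * |x 0|))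
        Filter.atTop (nhds 0) := by
      have h1 : Filter.Tendsto (fun n : ℕ => r ^ n * |x 0|) Filter.atTop (nhds 0) := by
        have := (tendsto_pow_atTop_nhds_zero_of_lt_one hr0 hr1).mul_const (|x 0|)
        simpa using this
      have h2 : Filter.Tendsto (fun n : ℕ => n - 1) Filter.atTop Filter.atTop :=
        Filter.tendsto_atTop_atTop.2 fun b => ⟨b + 1, fun a ha => by omega⟩
      have := (h1.comp h2).const_mul (1 / (m₁ - Λ))
      simpa using this
    apply squeeze_zero_norm' _ hg
    filter_upwards [Filter.eventually_ge_atTop 1] with n hn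
    have h1 := htbound n hn
    have h2 := hmain (n - 1)
    rw [Real.norm_eq_abs]
    rw [one_div, ← div_eq_inv_mul, le_div_iff₀ hmΛ] at *
    nlinarith [abs_nonneg (t n)]
end

section
/- One-step contraction for the constant off-time current loop: Let m₁ > 0 and Λ ≥ 0 with Λ < m₁/2, and let ψ : ℝ → ℝ be Lipschitz with constant Λ with ψ(0) = 0. If x, t ∈ ℝ satisfy m₁ t + ψ(t) = −x, then the updated state x' := x + m₁ t satisfies |x'| ≤ (Λ/(m₁ − Λ)) |x|, and Λ/(m₁ − Λ) < 1. -/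
/-- One-step contraction for the constant off-time current loop. -/
theorem constant_off_time_one_step_contraction
    (m₁ Λ : ℝ) (hm₁ : 0 < m₁) (hΛ : 0 ≤ Λ) (hΛm : Λ < m₁ / 2)
    (ψ : ℝ → ℝ)
    (hlip : ∀ a b, |ψ a - ψ b| ≤ Λ * |a - b|)
    (hψ0 : ψ 0 = 0)
    (x t : ℝ)
    (heq : m₁ * t + ψ t = -x) :
    |x + m₁ * t| ≤ Λ / (m₁ - Λ) * |x| ∧ Λ / (m₁ - Λ) < 1 := by
  have hψt : |ψ t| ≤ Λ * |t| := by
    have := hlip t 0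
    simpa [hψ0] using this
  have hpos : 0 < m₁ - Λ := by linarith
  have ht : (m₁ - Λ) * |t| ≤ |x| := by
    have h1 : m₁ * t = -x - ψ t := by linarith
    have h2 : |m₁ * t| ≤ |x| + Λ * |t| := by
      rw [h1]
      calc |-x - ψ t| ≤ |-x| + |ψ t| := abs_sub _ _
        _ ≤ |x| + Λ * |t| := by rw [abs_neg]; linarith
    rw [abs_mul, abs_of_pos hm₁] at h2
    linarith
  constructor
  · have hx' : x + m₁ * t = -ψ t := by linarith
    rw [hx', abs_neg]
    rw [div_mul_eq_mul_div, le_div_iff₀ hpos]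
    calc |ψ t| * (m₁ - Λ) ≤ (Λ * |t|) * (m₁ - Λ) := by
          exact mul_le_mul_of_nonneg_right hψt (le_of_lt hpos)
      _ = Λ * ((m₁ - Λ) * |t|) := by ring
      _ ≤ Λ * |x| := mul_le_mul_of_nonneg_left ht hΛ
  · rw [div_lt_one hpos]; linarith
end

section
/- Global asymptotic stability of the constant on-time valley current control loop (Corollary 1): Let m₂ > 0 and Λ ≥ 0 satisfy Λ < m₂/2. For each n ∈ ℕ let ψₙ : ℝ → ℝ be Lipschitz with constant Λ and satisfy ψₙ(0) = 0. Suppose real sequences (xₙ)ₙ≥0 and (tₙ)ₙ≥1 satisfy, for all n ≥ 1, xₙ = xₙ₋₁ − m₂ tₙ and 0 = xₙ + ψₙ(tₙ). Then |xₙ| ≤ (Λ/(m₂ − Λ))ⁿ |x₀| for all n ≥ 0; in particular xₙ → 0 and tₙ → 0 as n → ∞. -/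
/-- Global asymptotic stability of the constant on-time valley current control loop
(Corollary 1). -/
theorem constant_on_time_global_asymptotic_stability
    (m₂ Λ : ℝ) (hm₂ : 0 < m₂) (hΛ : 0 ≤ Λ) (hΛm : Λ < m₂ / 2)
    (ψ : ℕ → ℝ → ℝ)
    (hlip : ∀ n a b, |ψ n a - ψ n b| ≤ Λ * |a - b|)
    (hψ0 : ∀ n, ψ n 0 = 0)
    (x t : ℕ → ℝ)
    (hrec : ∀ n : ℕ, 1 ≤ n → x n = x (n - 1) - m₂ * t n)
    (htrig : ∀ n : ℕ, 1 ≤ n → 0 = x n + ψ n (t n)) :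
    (∀ n : ℕ, |x n| ≤ (Λ / (m₂ - Λ)) ^ n * |x 0|) ∧
      Filter.Tendsto x Filter.atTop (nhds 0) ∧
      Filter.Tendsto t Filter.atTop (nhds 0) := by
  have hc : 0 < m₂ - Λ := by linarith
  set r : ℝ := Λ / (m₂ - Λ) with hr
  have hr0 : 0 ≤ r := div_nonneg hΛ hc.le
  have hr1 : r < 1 := (div_lt_one hc).mpr (by linarith)
  -- |x n| ≤ Λ * |t n| for n ≥ 1
  have hx : ∀ n : ℕ, 1 ≤ n → |x n| ≤ Λ * |t n| := by
    intro n hn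
    have h := htrig n hn
    have hxn : x n = -(ψ n (t n)) := by linarith
    calc |x n| = |ψ n (t n) - ψ n 0| := by rw [hxn, hψ0, abs_neg, sub_zero]
      _ ≤ Λ * |t n - 0| := hlip n (t n) 0
      _ = Λ * |t n| := by rw [sub_zero]
  -- (m₂ - Λ) * |t n| ≤ |x (n-1)|
  have ht : ∀ n : ℕ, 1 ≤ n → (m₂ - Λ) * |t n| ≤ |x (n - 1)| := by
    intro n hn
    have h := hrec n hn
    have h1 : m₂ * |t n| = |x (n - 1) - x n| := by
      rw [show x (n - 1) - x n = m₂ * t n by linarith, abs_mul, abs_of_pos hm₂]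
    have h2 : |x (n - 1) - x n| ≤ |x (n - 1)| + |x n| := abs_sub _ _
    have h3 := hx n hn
    nlinarith [abs_nonneg (t n)]
  have htb : ∀ n : ℕ, 1 ≤ n → |t n| ≤ |x (n - 1)| / (m₂ - Λ) := by
    intro n hn
    rw [le_div_iff₀ hc, mul_comm]
    exact ht n hn
  have hstep : ∀ n : ℕ, 1 ≤ n → |x n| ≤ r * |x (n - 1)| := by
    intro n hn
    calc |x n| ≤ Λ * |t n| := hx n hn
      _ ≤ Λ * (|x (n - 1)| / (m₂ - Λ)) := by
          exact mul_le_mul_of_nonneg_left (htb n hn) hΛ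
      _ = r * |x (n - 1)| := by rw [hr]; ring
  have hbound : ∀ n : ℕ, |x n| ≤ r ^ n * |x 0| := by
    intro n
    induction n with
    | zero => simp
    | succ k ih =>
      calc |x (k + 1)| ≤ r * |x k| := by
            have := hstep (k + 1) (Nat.le_add_left 1 k)
            simpa using this
        _ ≤ r * (r ^ k * |x 0|) := mul_le_mul_of_nonneg_left ih hr0
        _ = r ^ (k + 1) * |x 0| := by ring
  refine ⟨hbound, ?_, ?_⟩
  · apply squeeze_zero_norm hbound
    have := tendsto_pow_atTop_nhds_zero_of_lt_one hr0 hr1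
    simpa using this.mul_const |x 0|
  · refine squeeze_zero_norm' (a := fun n => r ^ (n - 1) * |x 0| / (m₂ - Λ)) ?_ ?_
    · filter_upwards [Filter.eventually_ge_atTop 1] with n hn
      calc ‖t n‖ = |t n| := rfl
        _ ≤ |x (n - 1)| / (m₂ - Λ) := htb n hn
        _ ≤ r ^ (n - 1) * |x 0| / (m₂ - Λ) := by
            gcongr
            exact hbound (n - 1)
    · have h1 : Filter.Tendsto (fun n : ℕ => r ^ (n - 1)) Filter.atTop (nhds 0) :=
        (tendsto_pow_atTop_nhds_zero_of_lt_one hr0 hr1).comp (Filter.tendsto_sub_atTop_nat 1)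
      simpa using (h1.mul_const |x 0|).div_const (m₂ - Λ)
end

section
/- Global asymptotic stability of the fixed-frequency peak current control loop (Theorem 2): Let m₁ > m₂ ≥ 0 and Λ ≥ 0 satisfy Λ < (m₁ − m₂)/2. For each n ∈ ℕ let ψₙ : ℝ → ℝ be Lipschitz with constant Λ and satisfy ψₙ(0) = 0. Suppose real sequences (xₙ)ₙ≥0 and (uₙ)ₙ≥0 satisfy, for all n ≥ 1, xₙ = xₙ₋₁ − m₂ uₙ₋₁ + m₁ uₙ and 0 = xₙ + ψₙ(uₙ), with also 0 = x₀ + ψ₀(u₀). Then |uₙ| ≤ ((m₂ + Λ)/(m₁ − Λ))ⁿ |u₀| for all n ≥ 0, where (m₂ + Λ)/(m₁ − Λ) < 1; in particular uₙ → 0 and xₙ → 0 as n → ∞. -/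
/-! The trigger condition gives `xₙ = -ψₙ(uₙ)`, and substituting this into the recursion leaves
`m₁ uₙ₊₁ + ψₙ₊₁(uₙ₊₁) = m₂ uₙ + ψₙ(uₙ)`. Since `|ψₙ(u)| ≤ Λ |u|`, the left side has modulus at
least `(m₁ - Λ) |uₙ₊₁|` and the right side at most `(m₂ + Λ) |uₙ|`, so `|uₙ|` decays geometrically
with ratio `(m₂ + Λ) / (m₁ - Λ)`, which is `< 1` exactly when `2Λ < m₁ - m₂`. Finally
`|xₙ| ≤ Λ |uₙ|`. -/

open Filter Topology

theorem abs_le_mul_abs_of_abs_sub_le_of_map_zero {f : ℝ → ℝ} {Λ : ℝ}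
    (hf : ∀ a b, |f a - f b| ≤ Λ * |a - b|) (h0 : f 0 = 0) (a : ℝ) : |f a| ≤ Λ * |a| := by
  simpa [h0] using hf a 0

theorem sub_mul_abs_le_add_mul_abs_of_mul_add_eq {m₁ m₂ Λ a b p q : ℝ} (hm₂ : 0 ≤ m₂)
    (hp : |p| ≤ Λ * |a|) (hq : |q| ≤ Λ * |b|) (h : m₁ * a + p = m₂ * b + q) :
    (m₁ - Λ) * |a| ≤ (m₂ + Λ) * |b| := by
  have hlhs : m₁ * |a| ≤ |m₁ * a + p| + |p| :=
    calc m₁ * |a| ≤ |m₁ * a| := by rw [abs_mul]; gcongr; exact le_abs_self m₁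
      _ = |(m₁ * a + p) + -p| := by ring_nf
      _ ≤ |m₁ * a + p| + |p| := by rw [← abs_neg p]; exact abs_add_le _ _
  have hrhs : |m₂ * b + q| ≤ m₂ * |b| + |q| :=
    calc |m₂ * b + q| ≤ |m₂ * b| + |q| := abs_add_le _ _
      _ = m₂ * |b| + |q| := by rw [abs_mul, abs_of_nonneg hm₂]
  rw [h] at hlhs
  linarith

theorem tendsto_zero_of_abs_le_pow_mul {u : ℕ → ℝ} {r C : ℝ} (hr₀ : 0 ≤ r) (hr₁ : r < 1)
    (hu : ∀ n, |u n| ≤ r ^ n * C) : Tendsto u atTop (𝓝 0) :=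
  squeeze_zero_norm hu <| by
    simpa using (tendsto_pow_atTop_nhds_zero_of_lt_one hr₀ hr₁).mul_const C

theorem fixed_frequency_peak_global_asymptotic_stability_general
    (m₁ m₂ Λ : ℝ) (hm₂ : 0 ≤ m₂) (hΛ : 0 ≤ Λ)
    (hΛm : Λ < (m₁ - m₂) / 2)
    (ψ : ℕ → ℝ → ℝ)
    (hlip : ∀ n a b, |ψ n a - ψ n b| ≤ Λ * |a - b|)
    (hψ0 : ∀ n, ψ n 0 = 0)
    (x u : ℕ → ℝ)
    (hrec : ∀ n : ℕ, 1 ≤ n → x n = x (n - 1) - m₂ * u (n - 1) + m₁ * u n)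
    (htrig : ∀ n : ℕ, 1 ≤ n → 0 = x n + ψ n (u n))
    (htrig0 : 0 = x 0 + ψ 0 (u 0)) :
    (∀ n : ℕ, |u n| ≤ ((m₂ + Λ) / (m₁ - Λ)) ^ n * |u 0|) ∧
      (m₂ + Λ) / (m₁ - Λ) < 1 ∧
      Filter.Tendsto u Filter.atTop (nhds 0) ∧
      Filter.Tendsto x Filter.atTop (nhds 0) := by
  have hψ (n : ℕ) : ∀ a, |ψ n a| ≤ Λ * |a| := abs_le_mul_abs_of_abs_sub_le_of_map_zero (hlip n) (hψ0 n)
  have hx : ∀ n, x n = -ψ n (u n) := by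
    rintro (_ | n)
    · linarith
    · linarith [htrig (n + 1) le_add_self]
  have hden : 0 < m₁ - Λ := by linarith
  have hr₀ : 0 ≤ (m₂ + Λ) / (m₁ - Λ) := div_nonneg (by linarith) hden.le
  have hr₁ : (m₂ + Λ) / (m₁ - Λ) < 1 := (div_lt_one hden).2 (by linarith)
  have hstep n : |u (n + 1)| ≤ (m₂ + Λ) / (m₁ - Λ) * |u n| := by
    rw [div_mul_eq_mul_div, le_div_iff₀ hden, mul_comm]
    refine sub_mul_abs_le_add_mul_abs_of_mul_add_eq hm₂ (hψ (n + 1) _) (hψ n _) ?_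
    have := hrec (n + 1) le_add_self
    rw [Nat.add_sub_cancel, hx, hx] at this
    linarith
  have hbound n : |u n| ≤ ((m₂ + Λ) / (m₁ - Λ)) ^ n * |u 0| :=
    le_geom (u := fun n ↦ |u n|) hr₀ n fun k _ ↦ hstep k
  have hu := tendsto_zero_of_abs_le_pow_mul hr₀ hr₁ hbound
  refine ⟨hbound, hr₁, hu, tendsto_zero_of_abs_le_pow_mul (C := Λ * |u 0|) hr₀ hr₁ fun n ↦ ?_⟩
  calc |x n| ≤ Λ * |u n| := by rw [hx, abs_neg]; exact hψ n (u n)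
    _ ≤ Λ * (((m₂ + Λ) / (m₁ - Λ)) ^ n * |u 0|) := by gcongr; exact hbound n
    _ = ((m₂ + Λ) / (m₁ - Λ)) ^ n * (Λ * |u 0|) := by ring

/-- Global asymptotic stability of the fixed-frequency peak current control loop
(Theorem 2). -/
theorem fixed_frequency_peak_global_asymptotic_stability
    (m₁ m₂ Λ : ℝ) (hm : m₂ < m₁) (hm₂ : 0 ≤ m₂) (hΛ : 0 ≤ Λ)
    (hΛm : Λ < (m₁ - m₂) / 2)
    (ψ : ℕ → ℝ → ℝ)
    (hlip : ∀ n a b, |ψ n a - ψ n b| ≤ Λ * |a - b|)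
    (hψ0 : ∀ n, ψ n 0 = 0)
    (x u : ℕ → ℝ)
    (hrec : ∀ n : ℕ, 1 ≤ n → x n = x (n - 1) - m₂ * u (n - 1) + m₁ * u n)
    (htrig : ∀ n : ℕ, 1 ≤ n → 0 = x n + ψ n (u n))
    (htrig0 : 0 = x 0 + ψ 0 (u 0)) :
    (∀ n : ℕ, |u n| ≤ ((m₂ + Λ) / (m₁ - Λ)) ^ n * |u 0|) ∧
      (m₂ + Λ) / (m₁ - Λ) < 1 ∧
      Filter.Tendsto u Filter.atTop (nhds 0) ∧
      Filter.Tendsto x Filter.atTop (nhds 0) :=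
  fixed_frequency_peak_global_asymptotic_stability_general m₁ m₂ Λ hm₂ hΛ hΛm ψ hlip hψ0 x u hrec
    htrig htrig0
end

section
/- One-step contraction for the fixed-frequency peak current loop: Let m₁ > 0, m₂ ≥ 0, Λ ≥ 0 with Λ < m₁, and let ψ, φ : ℝ → ℝ each be Lipschitz with constant Λ and satisfy ψ(0) = φ(0) = 0. If u, u' ∈ ℝ satisfy m₁ u' + φ(u') = m₂ u + ψ(u), then |u'| ≤ ((m₂ + Λ)/(m₁ − Λ)) |u|. Moreover, (m₂ + Λ)/(m₁ − Λ) < 1 if and only if Λ < (m₁ − m₂)/2. -/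
/-- One-step contraction for the fixed-frequency peak current loop. -/
theorem fixed_frequency_peak_one_step_contraction
    (m₁ m₂ Λ : ℝ) (hm₁ : 0 < m₁) (hm₂ : 0 ≤ m₂) (hΛ : 0 ≤ Λ) (hΛm : Λ < m₁)
    (ψ φ : ℝ → ℝ)
    (hlipψ : ∀ a b, |ψ a - ψ b| ≤ Λ * |a - b|)
    (hlipφ : ∀ a b, |φ a - φ b| ≤ Λ * |a - b|)
    (hψ0 : ψ 0 = 0) (hφ0 : φ 0 = 0)
    (u u' : ℝ)
    (heq : m₁ * u' + φ u' = m₂ * u + ψ u) :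
    |u'| ≤ (m₂ + Λ) / (m₁ - Λ) * |u| ∧
      ((m₂ + Λ) / (m₁ - Λ) < 1 ↔ Λ < (m₁ - m₂) / 2) := by
  have hpos : 0 < m₁ - Λ := by linarith
  constructor
  · have hψ : |ψ u| ≤ Λ * |u| := by
      have := hlipψ u 0; simpa [hψ0] using this
    have hφ : |φ u'| ≤ Λ * |u'| := by
      have := hlipφ u' 0; simpa [hφ0] using this
    have key : m₁ * |u'| ≤ m₂ * |u| + Λ * |u| + Λ * |u'| := by
      have h1 : |m₁ * u'| = |m₂ * u + ψ u - φ u'| := by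
        rw [show m₂ * u + ψ u - φ u' = m₁ * u' by linarith]
      have h2 : |m₂ * u + ψ u - φ u'| ≤ |m₂ * u| + |ψ u| + |φ u'| := by
        calc |m₂ * u + ψ u - φ u'| ≤ |m₂ * u + ψ u| + |φ u'| := abs_sub _ _
          _ ≤ |m₂ * u| + |ψ u| + |φ u'| := by linarith [abs_add_le (m₂ * u) (ψ u)]
      rw [abs_mul, abs_of_pos hm₁] at h1
      rw [abs_mul, abs_of_nonneg hm₂] at h2
      linarith
    rw [div_mul_eq_mul_div, le_div_iff₀ hpos]
    nlinarith
  · rw [div_lt_one hpos]; constructor <;> intro h <;> linarith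
end

section
/- Global asymptotic stability of the fixed-frequency valley current control loop: Let m₂ > m₁ ≥ 0 and Λ ≥ 0 satisfy Λ < (m₂ − m₁)/2. For each n ∈ ℕ let ψₙ : ℝ → ℝ be Lipschitz with constant Λ and satisfy ψₙ(0) = 0. Suppose real sequences (xₙ)ₙ≥0 and (uₙ)ₙ≥0 satisfy, for all n ≥ 1, xₙ = xₙ₋₁ + m₁ uₙ₋₁ − m₂ uₙ and 0 = xₙ + ψₙ(uₙ), with also 0 = x₀ + ψ₀(u₀). Then |uₙ| ≤ ((m₁ + Λ)/(m₂ − Λ))ⁿ |u₀| for all n ≥ 0, where (m₁ + Λ)/(m₂ − Λ) < 1; in particular uₙ → 0 and xₙ → 0 as n → ∞. -/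
/-- Global asymptotic stability of the fixed-frequency valley current control loop. -/
theorem fixed_frequency_valley_global_asymptotic_stability
    (m₁ m₂ Λ : ℝ) (hm : m₁ < m₂) (hm₁ : 0 ≤ m₁) (hΛ : 0 ≤ Λ)
    (hΛm : Λ < (m₂ - m₁) / 2)
    (ψ : ℕ → ℝ → ℝ)
    (hlip : ∀ n a b, |ψ n a - ψ n b| ≤ Λ * |a - b|)
    (hψ0 : ∀ n, ψ n 0 = 0)
    (x u : ℕ → ℝ)
    (hrec : ∀ n : ℕ, 1 ≤ n → x n = x (n - 1) + m₁ * u (n - 1) - m₂ * u n)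
    (htrig : ∀ n : ℕ, 1 ≤ n → 0 = x n + ψ n (u n))
    (htrig0 : 0 = x 0 + ψ 0 (u 0)) :
    (∀ n : ℕ, |u n| ≤ ((m₁ + Λ) / (m₂ - Λ)) ^ n * |u 0|) ∧
      (m₁ + Λ) / (m₂ - Λ) < 1 ∧
      Filter.Tendsto u Filter.atTop (nhds 0) ∧
      Filter.Tendsto x Filter.atTop (nhds 0) := by
  have hden : 0 < m₂ - Λ := by linarith
  have hnum : 0 ≤ m₁ + Λ := by linarith
  set r : ℝ := (m₁ + Λ) / (m₂ - Λ) with hr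
  have hr0 : 0 ≤ r := div_nonneg hnum hden.le
  have hr1 : r < 1 := (div_lt_one hden).2 (by linarith)
  -- trigger equation at every n
  have hx : ∀ n : ℕ, x n = -ψ n (u n) := by
    intro n
    rcases Nat.eq_zero_or_pos n with h | h
    · subst h; linarith [htrig0]
    · linarith [htrig n h]
  have hψbd : ∀ n a, |ψ n a| ≤ Λ * |a| := by
    intro n a
    have := hlip n a 0
    simpa [hψ0 n] using this
  -- one-step contraction
  have hstep : ∀ n : ℕ, 1 ≤ n → |u n| ≤ r * |u (n - 1)| := by
    intro n hn
    have h1 := hrec n hn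
    rw [hx n, hx (n - 1)] at h1
    have key : m₂ * u n - ψ n (u n) = m₁ * u (n - 1) - ψ (n - 1) (u (n - 1)) := by
      linarith
    have lhs_lb : (m₂ - Λ) * |u n| ≤ |m₂ * u n - ψ n (u n)| := by
      have h2 : |m₂ * u n| - |ψ n (u n)| ≤ |m₂ * u n - ψ n (u n)| :=
        abs_sub_abs_le_abs_sub _ _
      have h3 : |m₂ * u n| = m₂ * |u n| := by
        rw [abs_mul, abs_of_nonneg (by linarith : (0:ℝ) ≤ m₂)]
      have h4 := hψbd n (u n)
      nlinarith
    have rhs_ub : |m₁ * u (n - 1) - ψ (n - 1) (u (n - 1))| ≤ (m₁ + Λ) * |u (n - 1)| := by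
      have h2 : |m₁ * u (n - 1) - ψ (n - 1) (u (n - 1))|
          ≤ |m₁ * u (n - 1)| + |ψ (n - 1) (u (n - 1))| := abs_sub _ _
      have h3 : |m₁ * u (n - 1)| = m₁ * |u (n - 1)| := by
        rw [abs_mul, abs_of_nonneg hm₁]
      have h4 := hψbd (n - 1) (u (n - 1))
      nlinarith
    have h5 : (m₂ - Λ) * |u n| ≤ (m₁ + Λ) * |u (n - 1)| := by
      rw [key] at lhs_lb; linarith
    rw [hr]
    rw [div_mul_eq_mul_div, le_div_iff₀ hden]
    nlinarith
  -- geometric bound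
  have hbound : ∀ n : ℕ, |u n| ≤ r ^ n * |u 0| := by
    intro n
    induction n with
    | zero => simp
    | succ k ih =>
      have h1 := hstep (k + 1) (Nat.le_add_left 1 k)
      simp only [Nat.add_sub_cancel] at h1
      calc |u (k + 1)| ≤ r * |u k| := h1
        _ ≤ r * (r ^ k * |u 0|) := by
            exact mul_le_mul_of_nonneg_left ih hr0
        _ = r ^ (k + 1) * |u 0| := by ring
  refine ⟨hbound, hr1, ?_, ?_⟩
  · have hgeo : Filter.Tendsto (fun n => r ^ n * |u 0|) Filter.atTop (nhds 0) := by
      have := tendsto_pow_atTop_nhds_zero_of_lt_one hr0 hr1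
      simpa using this.mul_const |u 0|
    have habs : Filter.Tendsto (fun n => |u n|) Filter.atTop (nhds 0) :=
      squeeze_zero (fun n => abs_nonneg _) hbound hgeo
    exact tendsto_zero_iff_abs_tendsto_zero u |>.2 habs
  · have hgeo : Filter.Tendsto (fun n => Λ * (r ^ n * |u 0|)) Filter.atTop (nhds 0) := by
      have := tendsto_pow_atTop_nhds_zero_of_lt_one hr0 hr1
      simpa using ((this.mul_const |u 0|).const_mul Λ)
    have hxb : ∀ n, |x n| ≤ Λ * (r ^ n * |u 0|) := by
      intro n
      have h1 : |x n| = |ψ n (u n)| := by rw [hx n, abs_neg]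
      rw [h1]
      calc |ψ n (u n)| ≤ Λ * |u n| := hψbd n (u n)
        _ ≤ Λ * (r ^ n * |u 0|) := mul_le_mul_of_nonneg_left (hbound n) hΛ
    have habs : Filter.Tendsto (fun n => |x n|) Filter.atTop (nhds 0) :=
      squeeze_zero (fun n => abs_nonneg _) hxb hgeo
    exact tendsto_zero_iff_abs_tendsto_zero x |>.2 habs
end

section
/- Sector boundedness of the centered static mapping (Appendix C): Let G₀ > 0 and Λ ≥ 0 with Λ·G₀ < 1, and let ψ : ℝ → ℝ be differentiable with ψ(0) = 0 and |ψ′(x)| ≤ Λ for all x. Let 𝒯̃ be the inverse of the strictly increasing bijection x ↦ x + ψ(G₀ x). Then 𝒯̃ is sector-bounded to [1/(1 + ΛG₀), 1/(1 − ΛG₀)]: for every x ∈ ℝ, (𝒯̃(x) − x/(1 + ΛG₀)) · (𝒯̃(x) − x/(1 − ΛG₀)) ≤ 0; equivalently, x/(1 + ΛG₀) ≤ 𝒯̃(x) ≤ x/(1 − ΛG₀) for x ≥ 0 and x/(1 − ΛG₀) ≤ 𝒯̃(x) ≤ x/(1 + ΛG₀) for x ≤ 0. -/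
/-- Sector boundedness of the centered static mapping (Appendix C):
the inverse `𝒯̃` of `x ↦ x + ψ (G₀ x)` is sector-bounded to
`[1/(1 + ΛG₀), 1/(1 - ΛG₀)]`. -/
theorem centered_static_mapping_sector_bounded
    (G₀ Λ : ℝ) (hG₀ : 0 < G₀) (hΛ : 0 ≤ Λ) (hΛG : Λ * G₀ < 1)
    (ψ : ℝ → ℝ) (hψ : Differentiable ℝ ψ) (hψ0 : ψ 0 = 0)
    (hψ' : ∀ x, |deriv ψ x| ≤ Λ)
    (T : ℝ → ℝ)
    (hTleft : Function.LeftInverse T fun x => x + ψ (G₀ * x))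
    (hTright : Function.RightInverse T fun x => x + ψ (G₀ * x)) :
    ∀ x : ℝ,
      (T x - x / (1 + Λ * G₀)) * (T x - x / (1 - Λ * G₀)) ≤ 0 := by
  intro x
  set y := T x with hy
  have hx : y + ψ (G₀ * y) = x := hTright x
  -- Lipschitz bound
  have hlip : LipschitzWith Λ.toNNReal ψ := by
    apply lipschitzWith_of_nnnorm_deriv_le hψ
    intro z
    have := hψ' z
    simp only [← NNReal.coe_le_coe, coe_nnnorm, Real.norm_eq_abs, Real.coe_toNNReal _ hΛ]
    exact this
  have hbound : |ψ (G₀ * y)| ≤ Λ * (G₀ * |y|) := by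
    have := hlip.dist_le_mul (G₀ * y) 0
    rw [Real.dist_eq, Real.dist_eq, hψ0, sub_zero, sub_zero, Real.coe_toNNReal _ hΛ] at this
    calc |ψ (G₀ * y)| ≤ Λ * |G₀ * y| := this
      _ = Λ * (G₀ * |y|) := by rw [abs_mul, abs_of_pos hG₀]
  have h1 : (0:ℝ) < 1 + Λ * G₀ := by nlinarith
  have h2 : (0:ℝ) < 1 - Λ * G₀ := by linarith
  have habs : |x - y| ≤ Λ * G₀ * |y| := by
    have : x - y = ψ (G₀ * y) := by linarith
    rw [this]; linarith [hbound]
  have hA := abs_le.mp habs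
  rcases le_or_gt 0 y with hy0 | hy0
  · -- y ≥ 0 : x ≥ y(1-ΛG₀), x ≤ y(1+ΛG₀)
    rw [abs_of_nonneg hy0] at hA
    have hl : x / (1 + Λ * G₀) ≤ y := by
      rw [div_le_iff₀ h1]; nlinarith [hA.2]
    have hr : y ≤ x / (1 - Λ * G₀) := by
      rw [le_div_iff₀ h2]; nlinarith [hA.1]
    nlinarith [hl, hr]
  · rw [abs_of_neg hy0] at hA
    have hl : y ≤ x / (1 + Λ * G₀) := by
      rw [le_div_iff₀ h1]; nlinarith [hA.1]
    have hr : x / (1 - Λ * G₀) ≤ y := by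
      rw [div_le_iff₀ h2]; nlinarith [hA.2]
    nlinarith [hl, hr]
end

section
/- α-sector-boundedness of the static current mapping (Appendix C, conclusion): Let G₀ > 0 and Λ ≥ 0 with Λ·G₀ < 1, let ψ : ℝ → ℝ be differentiable with ψ(0) = 0 and |ψ′| ≤ Λ, let 𝒯̃ be the inverse of x ↦ x + ψ(G₀ x), and for fixed I_c, I_p ∈ ℝ define the static current mapping 𝒯(i_c) = I_p + 𝒯̃(i_c − I_c). Then 𝒯 is α-sector-bounded to [K_lb, K_ub] with α = I_p − K·I_c interpreted pointwise as follows: for every i_c ∈ ℝ, (𝒯(i_c) − K_lb (i_c − I_c) − I_p) · (𝒯(i_c) − K_ub (i_c − I_c) − I_p) ≤ 0, where K_lb = 1/(1 + ΛG₀) and K_ub = 1/(1 − ΛG₀). -/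
/-! Write `k = ΛG₀` and `y = 𝒯̃ u` for the deviation `u = i_c - I_c`, so that `u = y + e` with
`e = ψ(G₀ y)`. The mean value theorem and `ψ 0 = 0` give `|e| ≤ k |y|`. Multiplying the sector
product by `(1 + k)(1 - k) > 0` turns it into `((1 + k) y - u)((1 - k) y - u) = e² - k² y² ≤ 0`. -/

theorem norm_le_mul_norm_of_norm_deriv_le {𝕜 G : Type*} [RCLike 𝕜] [NormedAddCommGroup G]
    [NormedSpace 𝕜 G] {f : 𝕜 → G} {C : ℝ} (hf : Differentiable 𝕜 f) (hf0 : f 0 = 0)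
    (bound : ∀ x, ‖deriv f x‖ ≤ C) (x : 𝕜) : ‖f x‖ ≤ C * ‖x‖ := by
  simpa [hf0] using Convex.norm_image_sub_le_of_norm_deriv_le (fun x _ => hf x)
    (fun x _ => bound x) convex_univ (Set.mem_univ 0) (Set.mem_univ x)

theorem sector_product_nonpos {k y e : ℝ} (hk₀ : 0 ≤ k) (hk₁ : k < 1) (he : |e| ≤ k * |y|) :
    (y - 1 / (1 + k) * (y + e)) * (y - 1 / (1 - k) * (y + e)) ≤ 0 := by
  have hpos : 0 < 1 + k := by linarith
  have hneg : 0 < 1 - k := by linarith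
  have hsq : e ^ 2 ≤ (k * y) ^ 2 := by
    rw [← sq_abs e, ← sq_abs (k * y), abs_mul, abs_of_nonneg hk₀]
    exact pow_le_pow_left₀ (abs_nonneg e) he 2
  have hprod : (y - 1 / (1 + k) * (y + e)) * (y - 1 / (1 - k) * (y + e))
      = (e ^ 2 - (k * y) ^ 2) / ((1 + k) * (1 - k)) := by
    field_simp
    ring
  rw [hprod]
  exact div_nonpos_of_nonpos_of_nonneg (by linarith) (by positivity)

theorem static_current_mapping_alpha_sector_bounded_general
    (G₀ Λ : ℝ) (hG₀ : 0 < G₀) (hΛ : 0 ≤ Λ) (hΛG : Λ * G₀ < 1)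
    (ψ : ℝ → ℝ) (hψ : Differentiable ℝ ψ) (hψ0 : ψ 0 = 0)
    (hψ' : ∀ x, |deriv ψ x| ≤ Λ)
    (Ttilde : ℝ → ℝ)
    (hTright : Function.RightInverse Ttilde fun x => x + ψ (G₀ * x))
    (I_c I_p : ℝ)
    (T : ℝ → ℝ) (hT : ∀ i_c, T i_c = I_p + Ttilde (i_c - I_c)) :
    ∀ i_c : ℝ,
      (T i_c - (1 / (1 + Λ * G₀)) * (i_c - I_c) - I_p) *
        (T i_c - (1 / (1 - Λ * G₀)) * (i_c - I_c) - I_p) ≤ 0 := by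
  intro i_c
  set y := Ttilde (i_c - I_c)
  have hy : y + ψ (G₀ * y) = i_c - I_c := hTright (i_c - I_c)
  have he : |ψ (G₀ * y)| ≤ Λ * G₀ * |y| := by
    calc |ψ (G₀ * y)| ≤ Λ * |G₀ * y| := norm_le_mul_norm_of_norm_deriv_le hψ hψ0 hψ' _
      _ = Λ * G₀ * |y| := by rw [abs_mul, abs_of_pos hG₀, mul_assoc]
  calc _ = (y - 1 / (1 + Λ * G₀) * (y + ψ (G₀ * y))) *
        (y - 1 / (1 - Λ * G₀) * (y + ψ (G₀ * y))) := by rw [hT, hy]; ring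
    _ ≤ 0 := sector_product_nonpos (by positivity) hΛG he

/-- α-sector-boundedness of the static current mapping (Appendix C, conclusion):
`𝒯 i_c = I_p + 𝒯̃ (i_c - I_c)` is α-sector-bounded to
`[1/(1 + ΛG₀), 1/(1 - ΛG₀)]` about the equilibrium `(I_c, I_p)`. -/
theorem static_current_mapping_alpha_sector_bounded
    (G₀ Λ : ℝ) (hG₀ : 0 < G₀) (hΛ : 0 ≤ Λ) (hΛG : Λ * G₀ < 1)
    (ψ : ℝ → ℝ) (hψ : Differentiable ℝ ψ) (hψ0 : ψ 0 = 0)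
    (hψ' : ∀ x, |deriv ψ x| ≤ Λ)
    (Ttilde : ℝ → ℝ)
    (hTleft : Function.LeftInverse Ttilde fun x => x + ψ (G₀ * x))
    (hTright : Function.RightInverse Ttilde fun x => x + ψ (G₀ * x))
    (I_c I_p : ℝ)
    (T : ℝ → ℝ) (hT : ∀ i_c, T i_c = I_p + Ttilde (i_c - I_c)) :
    ∀ i_c : ℝ,
      (T i_c - (1 / (1 + Λ * G₀)) * (i_c - I_c) - I_p) *
        (T i_c - (1 / (1 - Λ * G₀)) * (i_c - I_c) - I_p) ≤ 0 :=
  static_current_mapping_alpha_sector_bounded_general G₀ Λ hG₀ hΛ hΛG ψ hψ hψ0 hψ' Ttilde hTright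
    I_c I_p T hT
end
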